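/- For λ ∈ [0,1) and τ ∈ (0,1), the multi-step expectile Bellman operator T_{τ,λ} V = (1−λ) Σ_{n=1}^∞ λ^{n−1} (T_τ)^n V is a sup-norm contraction with modulus γ_{τ,λ} = (1−λ)γ_τ / (1 − λγ_τ), where γ_τ = 1 − 2α(1−γ)·min(τ,1−τ) < 1. -/

import Mathlib

/-! The expectile score `x ↦ τ x⁺ + (1 - τ) x⁻` has all difference quotients in
`[min τ (1 - τ), max τ (1 - τ)]`. Hence, with `x - y = γ d - D`, the one-step update
`D + 2α (score x - score y)` equals `(1 - 2αc) D + 2αc γ d` for some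
`2αc ∈ [2α min τ (1 - τ), 1]`, which is at most `γ_τ K` in absolute value when
`|D|, |d| ≤ K`. Averaging over actions and successor states makes `T_τ` a `γ_τ`-Lipschitz
map for the sup norm, so `(T_τ)^{n+1}` is `γ_τ^{n+1}`-Lipschitz, and the geometric weights
give `(1 - λ) ∑ λⁿ γ_τ^{n+1} = γ_{τ,λ}`. -/

open Finset

open scoped NNReal

def expectileScore (τ x : ℝ) : ℝ := τ * max x 0 + (1 - τ) * min x 0

lemma expectileScore_sub_bounds (τ : ℝ) {x y : ℝ} (hyx : y ≤ x) :
    min τ (1 - τ) * (x - y) ≤ expectileScore τ x - expectileScore τ y ∧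
      expectileScore τ x - expectileScore τ y ≤ max τ (1 - τ) * (x - y) := by
  have hmin := min_le_left τ (1 - τ)
  have hmin' := min_le_right τ (1 - τ)
  have hmax := le_max_left τ (1 - τ)
  have hmax' := le_max_right τ (1 - τ)
  unfold expectileScore
  rcases le_total x 0 with hx | hx <;> rcases le_total y 0 with hy | hy
  · simp only [max_eq_right, min_eq_left, hx, hy]
    constructor <;> nlinarith
  · have hx0 : x = 0 := le_antisymm hx (hy.trans hyx)
    have hy0 : y = 0 := le_antisymm (hx0 ▸ hyx) hy
    simp [hx0, hy0]
  · simp only [max_eq_left, min_eq_right, max_eq_right, min_eq_left, hx, hy]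
    constructor <;> nlinarith
  · simp only [max_eq_left, min_eq_right, hx, hy]
    constructor <;> nlinarith

lemma exists_expectileScore_sub_eq_mul (τ x y : ℝ) :
    ∃ c ∈ Set.Icc (min τ (1 - τ)) (max τ (1 - τ)),
      expectileScore τ x - expectileScore τ y = c * (x - y) := by
  wlog hyx : y < x generalizing x y
  · rcases (not_lt.1 hyx).eq_or_lt with rfl | hxy
    · exact ⟨min τ (1 - τ), ⟨le_rfl, min_le_max⟩, by simp⟩
    · obtain ⟨c, hc, he⟩ := this y x hxy
      exact ⟨c, hc, by linear_combination -he⟩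
  have hpos : 0 < x - y := sub_pos.2 hyx
  obtain ⟨hlo, hhi⟩ := expectileScore_sub_bounds τ hyx.le
  exact ⟨_, ⟨(le_div_iff₀ hpos).2 hlo, (div_le_iff₀ hpos).2 hhi⟩,
    (div_mul_cancel₀ _ hpos.ne').symm⟩

def expectileModulus (α γ τ : ℝ) : ℝ := 1 - 2 * α * (1 - γ) * min τ (1 - τ)

lemma expectileModulus_nonneg {α γ τ : ℝ} (hγ0 : 0 ≤ γ) (hτ0 : 0 ≤ τ) (hτ1 : τ ≤ 1)
    (hα0 : 0 ≤ α) (hα : 2 * α * max τ (1 - τ) ≤ 1) : 0 ≤ expectileModulus α γ τ := by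
  have hm : 0 ≤ min τ (1 - τ) := le_min hτ0 (by linarith)
  have : 2 * α * (1 - γ) * min τ (1 - τ) ≤ 2 * α * max τ (1 - τ) :=
    calc 2 * α * (1 - γ) * min τ (1 - τ) = 2 * α * min τ (1 - τ) * (1 - γ) := by ring
      _ ≤ 2 * α * min τ (1 - τ) := mul_le_of_le_one_right (by positivity) (by linarith)
      _ ≤ 2 * α * max τ (1 - τ) := by gcongr; exact min_le_max
  unfold expectileModulus
  linarith

lemma expectileModulus_le_one {α γ τ : ℝ} (hγ1 : γ ≤ 1) (hτ0 : 0 ≤ τ) (hτ1 : τ ≤ 1)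
    (hα0 : 0 ≤ α) : expectileModulus α γ τ ≤ 1 := by
  have hm : 0 ≤ min τ (1 - τ) := le_min hτ0 (by linarith)
  have : 0 ≤ 2 * α * (1 - γ) * min τ (1 - τ) := by
    have := sub_nonneg.2 hγ1
    positivity
  unfold expectileModulus
  linarith

lemma abs_add_expectileScore_sub_le {α γ τ K D d x y : ℝ}
    (hγ0 : 0 ≤ γ) (hγ1 : γ ≤ 1) (hτ0 : 0 ≤ τ) (hτ1 : τ ≤ 1)
    (hα0 : 0 ≤ α) (hα : 2 * α * max τ (1 - τ) ≤ 1)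
    (hD : |D| ≤ K) (hd : |d| ≤ K) (hxy : x - y = γ * d - D) :
    |D + 2 * α * (expectileScore τ x - expectileScore τ y)| ≤ expectileModulus α γ τ * K := by
  obtain ⟨c, ⟨hmc, hcM⟩, he⟩ := exists_expectileScore_sub_eq_mul τ x y
  have hK : 0 ≤ K := (abs_nonneg D).trans hD
  have hc0 : 0 ≤ 2 * α * c := mul_nonneg (by positivity) ((le_min hτ0 (by linarith)).trans hmc)
  have hc1 : 2 * α * c ≤ 1 := hα.trans' (by gcongr)
  calc |D + 2 * α * (expectileScore τ x - expectileScore τ y)|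
      = |(1 - 2 * α * c) * D + 2 * α * c * γ * d| := by rw [he, hxy]; ring_nf
    _ ≤ (1 - 2 * α * c) * |D| + 2 * α * c * γ * |d| := by
        refine (abs_add_le _ _).trans_eq ?_
        rw [abs_mul, abs_mul, abs_of_nonneg (sub_nonneg.2 hc1),
          abs_of_nonneg (mul_nonneg hc0 hγ0)]
    _ ≤ (1 - 2 * α * c) * K + 2 * α * c * γ * K := by gcongr
    _ = (1 - 2 * α * c * (1 - γ)) * K := by ring
    _ ≤ expectileModulus α γ τ * K := by
        refine mul_le_mul_of_nonneg_right ?_ hK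
        unfold expectileModulus
        have : 0 ≤ 2 * α * (1 - γ) := mul_nonneg (by positivity) (sub_nonneg.2 hγ1)
        nlinarith [mul_le_mul_of_nonneg_left hmc this]

lemma abs_add_mul_sum_le {ι : Type*} [Fintype ι] {w e : ι → ℝ} {D k c : ℝ}
    (hw0 : ∀ i, 0 ≤ w i) (hw1 : ∑ i, w i = 1) (h : ∀ i, |D + k * e i| ≤ c) :
    |D + k * ∑ i, w i * e i| ≤ c := by
  have hconv : D + k * ∑ i, w i * e i = ∑ i, w i • (D + k * e i) := by
    simp only [smul_eq_mul, mul_add, sum_add_distrib, ← sum_mul, hw1, mul_sum]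
    ring_nf
  rw [hconv, abs_le, ← Set.mem_Icc]
  exact (convex_Icc _ _).sum_mem (fun i _ => hw0 i) hw1 fun i _ => abs_le.1 (h i)

section ExpectileBellman

variable {S A : Type*} [Fintype S] [Fintype A]

def expectileBellman (pol : S → A → ℝ) (P R : S → A → S → ℝ) (γ α τ : ℝ) (V : S → ℝ) :
    S → ℝ :=
  fun s => V s + 2 * α * ∑ a, ∑ s', pol s a * P s a s' *
    expectileScore τ (R s a s' + γ * V s' - V s)

lemma lipschitzWith_expectileBellman {pol : S → A → ℝ} {P : S → A → S → ℝ}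
    (R : S → A → S → ℝ) {γ α τ : ℝ}
    (hpol0 : ∀ s a, 0 ≤ pol s a) (hpol1 : ∀ s, ∑ a, pol s a = 1)
    (hP0 : ∀ s a s', 0 ≤ P s a s') (hP1 : ∀ s a, ∑ s', P s a s' = 1)
    (hγ0 : 0 ≤ γ) (hγ1 : γ ≤ 1) (hτ0 : 0 ≤ τ) (hτ1 : τ ≤ 1)
    (hα0 : 0 ≤ α) (hα : 2 * α * max τ (1 - τ) ≤ 1) :
    LipschitzWith (expectileModulus α γ τ).toNNReal (expectileBellman pol P R γ α τ) := by
  refine LipschitzWith.of_dist_le_mul fun V W => ?_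
  have hg0 := expectileModulus_nonneg hγ0 hτ0 hτ1 hα0 hα
  rw [dist_eq_norm, dist_eq_norm, Real.coe_toNNReal _ hg0]
  refine (pi_norm_le_iff_of_nonneg (mul_nonneg hg0 (norm_nonneg _))).2 fun s => ?_
  have hcoord : ∀ s, |V s - W s| ≤ ‖V - W‖ := fun s => norm_le_pi_norm (V - W) s
  have hsplit : expectileBellman pol P R γ α τ V s - expectileBellman pol P R γ α τ W s
      = (V s - W s) + 2 * α * ∑ a, pol s a * ∑ s', P s a s' *
          (expectileScore τ (R s a s' + γ * V s' - V s)
            - expectileScore τ (R s a s' + γ * W s' - W s)) := by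
    simp only [expectileBellman, mul_sub, sum_sub_distrib, mul_sum, mul_assoc]
    ring
  rw [Pi.sub_apply, Real.norm_eq_abs, hsplit]
  refine abs_add_mul_sum_le (hpol0 s) (hpol1 s) fun a => ?_
  refine abs_add_mul_sum_le (hP0 s a) (hP1 s a) fun s' => ?_
  exact abs_add_expectileScore_sub_le hγ0 hγ1 hτ0 hτ1 hα0 hα (hcoord s) (hcoord s') (by ring)

end ExpectileBellman

section LambdaReturn

variable {E : Type*} [NormedAddCommGroup E] [NormedSpace ℝ E]

noncomputable def lambdaReturn (lam : ℝ) (T : E → E) (x : E) : E :=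
  (1 - lam) • ∑' n : ℕ, lam ^ n • T^[n + 1] x

lemma LipschitzWith.norm_tsum_geometric_iterate_sub_le {T : E → E} {K : ℝ≥0}
    (hT : LipschitzWith K T) {lam : ℝ} (hlam0 : 0 ≤ lam) (hlamK : lam * K < 1) {x y : E}
    (hx : Summable fun n : ℕ => lam ^ n • T^[n + 1] x)
    (hy : Summable fun n : ℕ => lam ^ n • T^[n + 1] y) :
    ‖∑' n : ℕ, lam ^ n • T^[n + 1] x - ∑' n : ℕ, lam ^ n • T^[n + 1] y‖
      ≤ K / (1 - lam * K) * ‖x - y‖ := by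
  have hgeom : HasSum (fun n : ℕ => (lam * K) ^ n * (K * ‖x - y‖))
      ((1 - lam * K)⁻¹ * (K * ‖x - y‖)) :=
    (hasSum_geometric_of_lt_one (by positivity) hlamK).mul_right _
  rw [← hx.tsum_sub hy]
  refine (tsum_of_norm_bounded hgeom fun n => ?_).trans_eq (by ring)
  calc ‖lam ^ n • T^[n + 1] x - lam ^ n • T^[n + 1] y‖
      = lam ^ n * ‖T^[n + 1] x - T^[n + 1] y‖ := by
        rw [← smul_sub, norm_smul, Real.norm_of_nonneg (pow_nonneg hlam0 n)]
    _ ≤ lam ^ n * (K ^ (n + 1) * ‖x - y‖) := by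
        gcongr
        exact_mod_cast (hT.iterate (n + 1)).norm_sub_le x y
    _ = (lam * K) ^ n * (K * ‖x - y‖) := by ring

lemma LipschitzWith.norm_lambdaReturn_sub_le {T : E → E} {K : ℝ≥0}
    (hT : LipschitzWith K T) {lam : ℝ} (hlam0 : 0 ≤ lam) (hlam1 : lam ≤ 1)
    (hlamK : lam * K < 1) {x y : E}
    (hx : Summable fun n : ℕ => lam ^ n • T^[n + 1] x)
    (hy : Summable fun n : ℕ => lam ^ n • T^[n + 1] y) :
    ‖lambdaReturn lam T x - lambdaReturn lam T y‖
      ≤ (1 - lam) * K / (1 - lam * K) * ‖x - y‖ := by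
  rw [lambdaReturn, lambdaReturn, ← smul_sub, norm_smul,
    Real.norm_of_nonneg (sub_nonneg.2 hlam1), mul_div_assoc, mul_assoc]
  exact mul_le_mul_of_nonneg_left (hT.norm_tsum_geometric_iterate_sub_le hlam0 hlamK hx hy)
    (sub_nonneg.2 hlam1)

end LambdaReturn

theorem multistep_expectile_contraction_general {S A : Type*}
    [Fintype S] [Fintype A]
    (pol : S → A → ℝ) (P : S → A → S → ℝ) (R : S → A → S → ℝ) (γ α τ lam : ℝ)
    (hpol0 : ∀ s a, 0 ≤ pol s a) (hpol1 : ∀ s, ∑ a, pol s a = 1)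
    (hP0 : ∀ s a s', 0 ≤ P s a s') (hP1 : ∀ s a, ∑ s', P s a s' = 1)
    (hγ0 : 0 ≤ γ) (hγ1 : γ < 1) (hτ0 : 0 < τ) (hτ1 : τ < 1)
    (hα0 : 0 < α) (hα : 2 * α * max τ (1 - τ) ≤ 1)
    (hlam0 : 0 ≤ lam) (hlam1 : lam < 1)
    (Tτ Tlam : (S → ℝ) → (S → ℝ))
    (hTτ : ∀ V s, Tτ V s =
      V s + 2 * α * ∑ a, ∑ s', pol s a * P s a s' *
        (τ * max (R s a s' + γ * V s' - V s) 0
          + (1 - τ) * min (R s a s' + γ * V s' - V s) 0))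
    (hsum : ∀ (V : S → ℝ) (s : S), Summable (fun n : ℕ => lam ^ n * (Tτ^[n + 1] V s)))
    (hTlam : ∀ V s, Tlam V s = (1 - lam) * ∑' n : ℕ, lam ^ n * (Tτ^[n + 1] V s))
    (V1 V2 : S → ℝ) :
    ‖Tlam V1 - Tlam V2‖ ≤
      (1 - lam) * (1 - 2 * α * (1 - γ) * min τ (1 - τ)) /
        (1 - lam * (1 - 2 * α * (1 - γ) * min τ (1 - τ))) * ‖V1 - V2‖ := by
  have hTτ_eq : Tτ = expectileBellman pol P R γ α τ := funext fun V => funext (hTτ V)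
  have hsum' : ∀ V, Summable fun n : ℕ => lam ^ n • Tτ^[n + 1] V :=
    fun V => Pi.summable.2 (hsum V)
  have hTlam_eq : Tlam = lambdaReturn lam Tτ := by
    funext V s
    rw [hTlam, lambdaReturn, Pi.smul_apply, tsum_apply (hsum' V)]
    rfl
  have hg0 := expectileModulus_nonneg hγ0 hτ0.le hτ1.le hα0.le hα
  have hK : ((expectileModulus α γ τ).toNNReal : ℝ) = expectileModulus α γ τ :=
    Real.coe_toNNReal _ hg0
  have hlamK : lam * (expectileModulus α γ τ).toNNReal < 1 := by
    rw [hK]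
    have hg1 := expectileModulus_le_one hγ1.le hτ0.le hτ1.le hα0.le
    exact (mul_le_of_le_one_right hlam0 hg1).trans_lt hlam1
  have hT : LipschitzWith (expectileModulus α γ τ).toNNReal Tτ := hTτ_eq ▸
    lipschitzWith_expectileBellman R hpol0 hpol1 hP0 hP1 hγ0 hγ1.le hτ0.le hτ1.le hα0.le hα
  have key := hT.norm_lambdaReturn_sub_le hlam0 hlam1.le hlamK (hsum' V1) (hsum' V2)
  rwa [hK, ← hTlam_eq] at key

/-- The multi-step expectile Bellman operator
`T_{τ,λ} V = (1−λ) Σ_{n≥1} λ^{n−1} (T_τ)^n V` is a sup-norm contraction with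
modulus `γ_{τ,λ} = (1−λ)γ_τ / (1 − λγ_τ)` where `γ_τ = 1 − 2α(1−γ)min(τ,1−τ)`. -/
theorem multistep_expectile_contraction {S A : Type*}
    [Fintype S] [Nonempty S] [Fintype A] [Nonempty A]
    (pol : S → A → ℝ) (P : S → A → S → ℝ) (R : S → A → S → ℝ) (γ α τ lam : ℝ)
    (hpol0 : ∀ s a, 0 ≤ pol s a) (hpol1 : ∀ s, ∑ a, pol s a = 1)
    (hP0 : ∀ s a s', 0 ≤ P s a s') (hP1 : ∀ s a, ∑ s', P s a s' = 1)
    (hγ0 : 0 ≤ γ) (hγ1 : γ < 1) (hτ0 : 0 < τ) (hτ1 : τ < 1)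
    (hα0 : 0 < α) (hα : 2 * α * max τ (1 - τ) ≤ 1)
    (hlam0 : 0 ≤ lam) (hlam1 : lam < 1)
    (Tτ Tlam : (S → ℝ) → (S → ℝ))
    (hTτ : ∀ V s, Tτ V s =
      V s + 2 * α * ∑ a, ∑ s', pol s a * P s a s' *
        (τ * max (R s a s' + γ * V s' - V s) 0
          + (1 - τ) * min (R s a s' + γ * V s' - V s) 0))
    (hsum : ∀ (V : S → ℝ) (s : S), Summable (fun n : ℕ => lam ^ n * (Tτ^[n + 1] V s)))
    (hTlam : ∀ V s, Tlam V s = (1 - lam) * ∑' n : ℕ, lam ^ n * (Tτ^[n + 1] V s))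
    (V1 V2 : S → ℝ) :
    ‖Tlam V1 - Tlam V2‖ ≤
      (1 - lam) * (1 - 2 * α * (1 - γ) * min τ (1 - τ)) /
        (1 - lam * (1 - 2 * α * (1 - γ) * min τ (1 - τ))) * ‖V1 - V2‖ :=
  multistep_expectile_contraction_general pol P R γ α τ lam hpol0 hpol1 hP0 hP1 hγ0 hγ1 hτ0 hτ1 hα0
    hα hlam0 hlam1 Tτ Tlam hTτ hsum hTlam V1 V2
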